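/- arXiv:1305.3616 — 2 statements merged into one kernel-verified Lean document; each statement's English description precedes it below -/
import Mathlib

section
/- The function A ↦ -log f(t; A), where log f(t; A) = Σ_{i: t_i < T} log(Σ_{j: t_j < t_i} α_{ji} γ(t_j; t_i)) - Σ_{i: t_i < T} Σ_{k: t_k < t_i} α_{ki} G(t_k, t_i) - Σ_{n: t_n > T} Σ_{m: t_m < T} α_{mn} G(t_m, T), with fixed nonnegative constants γ(t_j; t_i) and G(·,·), is convex on the domain of matrices A with nonnegative entries where each inner sum Σ_{j: t_j < t_i} α_{ji} γ(t_j; t_i) is positive. -/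
open Finset

/-- The negative log-likelihood of the additive risk model is
convex in the matrix of parameters, on the domain of nonnegative matrices
where each inner sum is positive. -/
theorem additive_nll_convex
    {N : ℕ} (t : Fin N → ℝ) (T : ℝ)
    (γc : Fin N → Fin N → ℝ) (G : Fin N → Fin N → ℝ) (GT : Fin N → ℝ)
    (hγc : ∀ j i, 0 ≤ γc j i) (hG : ∀ k i, 0 ≤ G k i) (hGT : ∀ m, 0 ≤ GT m) :
    ConvexOn ℝ
      {A : Fin N → Fin N → ℝ | (∀ j i, 0 ≤ A j i) ∧
        ∀ i, t i < T →
          0 < ∑ j ∈ univ.filter (fun j => t j < t i), A j i * γc j i}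
      (fun A : Fin N → Fin N → ℝ =>
        -((∑ i ∈ univ.filter (fun i => t i < T),
              Real.log (∑ j ∈ univ.filter (fun j => t j < t i), A j i * γc j i))
          - (∑ i ∈ univ.filter (fun i => t i < T),
              ∑ k ∈ univ.filter (fun k => t k < t i), A k i * G k i)
          - (∑ n ∈ univ.filter (fun n => T < t n),
              ∑ m ∈ univ.filter (fun m => t m < T), A m n * GT m))) := by
  have hsum : ∀ (A B : Fin N → Fin N → ℝ) (a b : ℝ) (i : Fin N),
      ∑ j ∈ univ.filter (fun j => t j < t i), (a • A + b • B) j i * γc j i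
        = a * ∑ j ∈ univ.filter (fun j => t j < t i), A j i * γc j i
          + b * ∑ j ∈ univ.filter (fun j => t j < t i), B j i * γc j i := by
    intro A B a b i
    rw [Finset.mul_sum, Finset.mul_sum, ← Finset.sum_add_distrib]
    refine Finset.sum_congr rfl fun j _ => ?_
    simp only [Pi.add_apply, Pi.smul_apply, smul_eq_mul]
    ring
  constructor
  · -- convexity of the domain
    intro A hA B hB a b ha hb hab
    refine ⟨fun j i => ?_, fun i hi => ?_⟩
    · have h1 := hA.1 j i
      have h2 := hB.1 j i
      simp only [Pi.add_apply, Pi.smul_apply, smul_eq_mul]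
      nlinarith [mul_nonneg ha h1, mul_nonneg hb h2]
    · rw [hsum]
      have h1 := hA.2 i hi
      have h2 := hB.2 i hi
      rcases ha.eq_or_lt with h | h
      · have hb1 : b = 1 := by linarith
        rw [← h, hb1]; simpa using h2
      · nlinarith [mul_pos h h1, mul_nonneg hb h2.le]
  · -- the convexity inequality
    intro A hA B hB a b ha hb hab
    simp only [smul_eq_mul]
    have hS2 : ∑ i ∈ univ.filter (fun i => t i < T),
          ∑ k ∈ univ.filter (fun k => t k < t i), (a • A + b • B) k i * G k i
        = a * ∑ i ∈ univ.filter (fun i => t i < T),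
            ∑ k ∈ univ.filter (fun k => t k < t i), A k i * G k i
          + b * ∑ i ∈ univ.filter (fun i => t i < T),
            ∑ k ∈ univ.filter (fun k => t k < t i), B k i * G k i := by
      rw [Finset.mul_sum, Finset.mul_sum, ← Finset.sum_add_distrib]
      refine Finset.sum_congr rfl fun i _ => ?_
      rw [Finset.mul_sum, Finset.mul_sum, ← Finset.sum_add_distrib]
      refine Finset.sum_congr rfl fun k _ => ?_
      simp only [Pi.add_apply, Pi.smul_apply, smul_eq_mul]
      ring
    have hS3 : ∑ n ∈ univ.filter (fun n => T < t n),
          ∑ m ∈ univ.filter (fun m => t m < T), (a • A + b • B) m n * GT m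
        = a * ∑ n ∈ univ.filter (fun n => T < t n),
            ∑ m ∈ univ.filter (fun m => t m < T), A m n * GT m
          + b * ∑ n ∈ univ.filter (fun n => T < t n),
            ∑ m ∈ univ.filter (fun m => t m < T), B m n * GT m := by
      rw [Finset.mul_sum, Finset.mul_sum, ← Finset.sum_add_distrib]
      refine Finset.sum_congr rfl fun n _ => ?_
      rw [Finset.mul_sum, Finset.mul_sum, ← Finset.sum_add_distrib]
      refine Finset.sum_congr rfl fun m _ => ?_
      simp only [Pi.add_apply, Pi.smul_apply, smul_eq_mul]
      ring
    have hS1 : a * ∑ i ∈ univ.filter (fun i => t i < T),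
            Real.log (∑ j ∈ univ.filter (fun j => t j < t i), A j i * γc j i)
          + b * ∑ i ∈ univ.filter (fun i => t i < T),
            Real.log (∑ j ∈ univ.filter (fun j => t j < t i), B j i * γc j i)
        ≤ ∑ i ∈ univ.filter (fun i => t i < T),
            Real.log (∑ j ∈ univ.filter (fun j => t j < t i),
              (a • A + b • B) j i * γc j i) := by
      rw [Finset.mul_sum, Finset.mul_sum, ← Finset.sum_add_distrib]
      refine Finset.sum_le_sum fun i hi => ?_
      have hi' : t i < T := (Finset.mem_filter.mp hi).2
      rw [hsum]
      have h1 := hA.2 i hi'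
      have h2 := hB.2 i hi'
      have := (strictConcaveOn_log_Ioi.concaveOn).2
        (Set.mem_Ioi.mpr h1) (Set.mem_Ioi.mpr h2) ha hb hab
      simpa using this
    linarith [hS1, hS2, hS3]
end

section
/- Under the reparameterization α_{ki} = log β_{ki}, the negative log-likelihood of the multiplicative model, -log f(t; A) = -Σ_{i: t_i<T} Σ_{k: t_k<t_i} α_{ki} - Σ_{i: t_i<T} log α_{0i}(t_i) + Σ_{i: t_i<T} Σ_{j: t_j≤t_i} exp(Σ_{k: t_k<t_j} α_{ki}) c_{ji} + Σ_{n: t_n>T} Σ_{j: t_j≤T} exp(Σ_{k: t_k<t_j} α_{kn}) c_{jn}, with fixed nonnegative constants c_{ji} = ∫_{t_{j-1}}^{t_j} α_{0i}(s) ds, is a convex function of the matrix A ∈ ℝ^{N×N}. -/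
open Finset

private lemma exp_lin_convex {N : ℕ} (s : Finset (Fin N)) (i : Fin N) (c : ℝ) (hc : 0 ≤ c) :
    ConvexOn ℝ Set.univ
      (fun A : Fin N → Fin N → ℝ => Real.exp (∑ k ∈ s, A k i) * c) := by
  let L : (Fin N → Fin N → ℝ) →ₗ[ℝ] ℝ := ∑ k ∈ s, ((LinearMap.proj i : (Fin N → ℝ) →ₗ[ℝ] ℝ).comp (LinearMap.proj k : (Fin N → Fin N → ℝ) →ₗ[ℝ] (Fin N → ℝ)))
  have hL : ∀ A : Fin N → Fin N → ℝ, L A = ∑ k ∈ s, A k i := by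
    intro A; simp [L, LinearMap.sum_apply]
  have h := (convexOn_exp.comp_affineMap L.toAffineMap).smul hc
  have hpre : (L.toAffineMap ⁻¹' Set.univ) = Set.univ := Set.preimage_univ
  rw [hpre] at h
  convert h using 2 with A
  case e'_12 => simp [hL, mul_comm]
  all_goals exact rfl

private lemma convexOn_finset_sum {ι E : Type*} [AddCommGroup E] [Module ℝ E]
    (s : Finset ι) (f : ι → E → ℝ) (h : ∀ i ∈ s, ConvexOn ℝ Set.univ (f i)) :
    ConvexOn ℝ Set.univ (fun x => ∑ i ∈ s, f i x) := by
  classical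
  induction s using Finset.cons_induction with
  | empty => simpa using convexOn_const (0:ℝ) convex_univ
  | cons a s ha ih =>
    simp only [Finset.sum_cons]
    exact (h a (Finset.mem_cons_self a s)).add
      (ih fun i hi => h i (Finset.mem_cons_of_mem hi))

/-- After reparameterizing `α_{ki} = log β_{ki}`, the negative
log-likelihood of the multiplicative risk model is convex on all of ℝ^{N×N}. -/
theorem multiplicative_nll_convex
    {N : ℕ} (t : Fin N → ℝ) (T : ℝ)
    (α0 : Fin N → ℝ) (c : Fin N → Fin N → ℝ)
    (hα0 : ∀ i, 0 < α0 i) (hc : ∀ j i, 0 ≤ c j i) :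
    ConvexOn ℝ Set.univ
      (fun A : Fin N → Fin N → ℝ =>
        -(∑ i ∈ univ.filter (fun i => t i < T),
            ∑ k ∈ univ.filter (fun k => t k < t i), A k i)
        - (∑ i ∈ univ.filter (fun i => t i < T), Real.log (α0 i))
        + (∑ i ∈ univ.filter (fun i => t i < T),
            ∑ j ∈ univ.filter (fun j => t j ≤ t i),
              Real.exp (∑ k ∈ univ.filter (fun k => t k < t j), A k i) * c j i)
        + (∑ n ∈ univ.filter (fun n => T < t n),
            ∑ j ∈ univ.filter (fun j => t j ≤ T),
              Real.exp (∑ k ∈ univ.filter (fun k => t k < t j), A k n) * c j n)) := by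
  have h1 : ConvexOn ℝ Set.univ
      (fun A : Fin N → Fin N → ℝ =>
        -(∑ i ∈ univ.filter (fun i => t i < T),
            ∑ k ∈ univ.filter (fun k => t k < t i), A k i)
        - (∑ i ∈ univ.filter (fun i => t i < T), Real.log (α0 i))) := by
    let L : (Fin N → Fin N → ℝ) →ₗ[ℝ] ℝ :=
      -∑ i ∈ univ.filter (fun i => t i < T),
        ∑ k ∈ univ.filter (fun k => t k < t i), ((LinearMap.proj i : (Fin N → ℝ) →ₗ[ℝ] ℝ).comp (LinearMap.proj k : (Fin N → Fin N → ℝ) →ₗ[ℝ] (Fin N → ℝ)))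
    have hL := L.convexOn convex_univ
    have h2 := hL.add (convexOn_const
      (-(∑ i ∈ univ.filter (fun i => t i < T), Real.log (α0 i))) convex_univ)
    convert h2 using 2 with A
    case e'_12 => simp [L, LinearMap.sum_apply, sub_eq_add_neg]
    all_goals exact rfl
  have h3 : ConvexOn ℝ Set.univ
      (fun A : Fin N → Fin N → ℝ =>
        ∑ i ∈ univ.filter (fun i => t i < T),
            ∑ j ∈ univ.filter (fun j => t j ≤ t i),
              Real.exp (∑ k ∈ univ.filter (fun k => t k < t j), A k i) * c j i) := by
    refine convexOn_finset_sum _ _ (fun i _ => ?_)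
    exact convexOn_finset_sum _ _ (fun j _ => exp_lin_convex _ _ _ (hc j i))
  have h4 : ConvexOn ℝ Set.univ
      (fun A : Fin N → Fin N → ℝ =>
        ∑ n ∈ univ.filter (fun n => T < t n),
            ∑ j ∈ univ.filter (fun j => t j ≤ T),
              Real.exp (∑ k ∈ univ.filter (fun k => t k < t j), A k n) * c j n) := by
    refine convexOn_finset_sum _ _ (fun n _ => ?_)
    exact convexOn_finset_sum _ _ (fun j _ => exp_lin_convex _ _ _ (hc j n))
  exact (h1.add h3).add h4
end
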